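/- Let q be a positive real number with q ≠ 1 and let k, l ≥ 2 be integers. Then q·(1−q)^{k+l−3} · Σ_{μ ⊢ k} Σ_{ν ⊢ l} ((−1)^{ℓ(μ)+ℓ(ν)}/(z_μ z_ν)) · Σ_{c, d} c·d·(1−q^{c−1})(1−q^{d−1})/(1−q^{c+d−1}) = (q−q²)^{k+l−3} · (1−q²) · {k−1}_q {l−1}_q / ({k+l−1}_q {k+l−2}_q {k+l−3}_q), where the inner sum runs over all parts c of μ and d of ν counted with multiplicity. -/

import Mathlib

open Finset

/-- `z_μ = ∏_j j^{m_j(μ)} · m_j(μ)!` where `m_j(μ)` is the number of parts of `μ`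
equal to `j`. -/
def zPartition {n : ℕ} (P : Nat.Partition n) : ℕ :=
  ∏ j ∈ P.parts.toFinset, j ^ (P.parts.count j) * (P.parts.count j).factorial

/-- The `q`-analog `{m}_q = (q^m - 1)/(q - 1)` of an integer `m`. -/
noncomputable def qAnalog (q : ℝ) (m : ℕ) : ℝ := (q ^ m - 1) / (q - 1)

/-!
Write `w(μ) = (-1)^ℓ(μ) / z_μ` and `S(m) = ∑_{ν ⊢ m} w(ν)`. Adding a part `c` to a partition
of `n - c` multiplies `z` by `c · m_c` and flips the sign, so
`∑_{μ ⊢ n} w(μ) · c · m_c(μ) = -S(n - c)`. Summed against `g(c)` this gives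
`∑_{μ ⊢ n} w(μ) ∑_{c ∈ μ} c g(c) = -∑_{m < n} g(n - m) S(m)`; for `g = 1` it reads
`n S(n) = -∑_{m < n} S(m)`, whence `S = 1, -1, 0, 0, …`, and so the left side is the difference
`g(n - 1) - g(n)` once `n ≥ 2`. Applied in `μ` and in `ν`, the double sum of the theorem
collapses to a second difference of `(1 - q^{c-1})(1 - q^{d-1}) / (1 - q^{c+d-1})` at
`c ∈ {k - 1, k}`, `d ∈ {l - 1, l}`, and what is left is a rational identity in `q`, `q^k`, `q^l`.
-/

def zMultiset (s : Multiset ℕ) : ℕ :=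
  ∏ j ∈ s.toFinset, j ^ s.count j * (s.count j).factorial

theorem zMultiset_eq_prod_of_subset {s : Multiset ℕ} {S : Finset ℕ} (h : s.toFinset ⊆ S) :
    zMultiset s = ∏ j ∈ S, j ^ s.count j * (s.count j).factorial :=
  Finset.prod_subset h fun j _ hj => by
    simp [Multiset.count_eq_zero.mpr (by simpa using hj)]

theorem zMultiset_cons (c : ℕ) (s : Multiset ℕ) :
    zMultiset (c ::ₘ s) = c * (s.count c + 1) * zMultiset s := by
  classical
  set S := (c ::ₘ s).toFinset
  have hsub : s.toFinset ⊆ S := by intro j; simp +contextual [S]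
  rw [zMultiset_eq_prod_of_subset hsub, zMultiset, mul_comm]
  have hfactor : ∀ j, j ^ (c ::ₘ s).count j * ((c ::ₘ s).count j).factorial =
      j ^ s.count j * (s.count j).factorial * if j = c then c * (s.count c + 1) else 1 := by
    intro j
    rw [Multiset.count_cons]
    split_ifs with h
    · subst h; rw [pow_succ, Nat.factorial_succ]; ring
    · simp
  simp only [hfactor, Finset.prod_mul_distrib, Finset.prod_ite_eq', S, Multiset.mem_toFinset,
    Multiset.mem_cons_self, if_true]

noncomputable def zWeight (s : Multiset ℕ) : ℝ := (-1) ^ Multiset.card s / zMultiset s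

noncomputable def zWeightSum (n : ℕ) : ℝ := ∑ μ : n.Partition, zWeight μ.parts

theorem zWeight_cons_mul {c : ℕ} (hc : c ≠ 0) (s : Multiset ℕ) :
    zWeight (c ::ₘ s) * (c * (c ::ₘ s).count c) = -zWeight s := by
  have hc' : (c : ℝ) * (s.count c + 1) ≠ 0 := by positivity
  simp only [zWeight, zMultiset_cons, Multiset.card_cons, Multiset.count_cons_self]
  push_cast
  rw [pow_succ, mul_comm ((c : ℝ) * _) (zMultiset s : ℝ), ← div_div, div_mul_cancel₀ _ hc']
  ring

theorem sum_zWeight_mul_count {n c : ℕ} (hc1 : 1 ≤ c) (hcn : c ≤ n) :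
    ∑ μ : n.Partition, zWeight μ.parts * (c * μ.parts.count c) = -zWeightSum (n - c) := by
  classical
  rw [← Fintype.sum_subtype_add_sum_subtype (fun μ : n.Partition => c ∈ μ.parts),
    ← Equiv.sum_comp (Nat.Partition.partitionWithPartEquiv hc1 hcn).symm, zWeightSum,
    ← Finset.sum_neg_distrib]
  have hout : ∀ μ : {μ : n.Partition // c ∉ μ.parts},
      zWeight μ.1.parts * (c * μ.1.parts.count c) = 0 := fun μ => by
    simp [Multiset.count_eq_zero.mpr μ.2]
  simp only [hout, Finset.sum_const_zero, add_zero,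
    Nat.Partition.partitionWithPartEquiv_symm_apply_parts]
  exact Finset.sum_congr rfl fun ν _ => zWeight_cons_mul (by omega) ν.parts

theorem Nat.Partition.sum_map_eq_sum_Icc {n : ℕ} (μ : n.Partition) (f : ℕ → ℝ) :
    (μ.parts.map f).sum = ∑ c ∈ Finset.Icc 1 n, μ.parts.count c * f c := by
  classical
  rw [Finset.sum_multiset_map_count]
  have hsub : μ.parts.toFinset ⊆ Finset.Icc 1 n := fun c hc => by
    rw [Multiset.mem_toFinset] at hc
    exact Finset.mem_Icc.mpr ⟨μ.parts_pos hc, μ.le_of_mem_parts hc⟩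
  rw [Finset.sum_subset hsub fun c _ hc => by
    simp [Multiset.count_eq_zero.mpr (by simpa using hc)]]
  simp [nsmul_eq_mul]

theorem sum_Icc_eq_sum_range_sub {M : Type*} [AddCommMonoid M] (n : ℕ) (f : ℕ → M) :
    ∑ c ∈ Finset.Icc 1 n, f c = ∑ m ∈ Finset.range n, f (n - m) :=
  Finset.sum_nbij' (n - ·) (n - ·) (by simp +contextual; omega) (by simp +contextual; omega)
    (by simp +contextual; omega) (by simp +contextual; omega)
    (fun c hc => by rw [Nat.sub_sub_self (Finset.mem_Icc.mp hc).2])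

theorem sum_zWeight_mul_sum_map (n : ℕ) (g : ℕ → ℝ) :
    ∑ μ : n.Partition, zWeight μ.parts * (μ.parts.map fun c : ℕ => (c : ℝ) * g c).sum
      = -∑ m ∈ Finset.range n, g (n - m) * zWeightSum m := by
  simp only [Nat.Partition.sum_map_eq_sum_Icc, Finset.mul_sum]
  rw [Finset.sum_comm, sum_Icc_eq_sum_range_sub, ← Finset.sum_neg_distrib]
  refine Finset.sum_congr rfl fun m hm => ?_
  have hm : m < n := Finset.mem_range.mp hm
  calc ∑ μ : n.Partition, zWeight μ.parts * (μ.parts.count (n - m) * ((n - m : ℕ) * g (n - m)))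
      = (∑ μ : n.Partition, zWeight μ.parts * ((n - m : ℕ) * μ.parts.count (n - m)))
          * g (n - m) := by
        rw [Finset.sum_mul]; exact Finset.sum_congr rfl fun _ _ => by ring
    _ = -(g (n - m) * zWeightSum m) := by
        rw [sum_zWeight_mul_count (by omega) (Nat.sub_le n m), Nat.sub_sub_self hm.le]; ring

theorem zWeightSum_zero : zWeightSum 0 = 1 := by
  simp [zWeightSum, zWeight, zMultiset]

theorem natCast_mul_zWeightSum (n : ℕ) :
    n * zWeightSum n = -∑ m ∈ Finset.range n, zWeightSum m := by
  have h := sum_zWeight_mul_sum_map n 1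
  simp only [Pi.one_apply, mul_one, one_mul] at h
  rw [← h, zWeightSum, Finset.mul_sum]
  refine Finset.sum_congr rfl fun μ _ => ?_
  rw [← Nat.cast_multiset_sum, μ.parts_sum, mul_comm]

theorem sum_range_zWeightSum {n : ℕ} (hn : 2 ≤ n) :
    ∑ m ∈ Finset.range n, zWeightSum m = 0 := by
  induction n, hn using Nat.le_induction with
  | base =>
    have h1 := natCast_mul_zWeightSum 1
    simp only [Finset.sum_range_one, Nat.cast_one, one_mul] at h1
    rw [Finset.sum_range_succ, Finset.sum_range_one, h1, add_neg_cancel]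
  | succ n hn ih =>
    have hS := natCast_mul_zWeightSum n
    rw [ih, neg_zero, mul_eq_zero, Nat.cast_eq_zero] at hS
    rw [Finset.sum_range_succ, ih, hS.resolve_left (by omega), add_zero]

theorem zWeightSum_one : zWeightSum 1 = -1 := by
  simpa [zWeightSum_zero] using natCast_mul_zWeightSum 1

theorem zWeightSum_of_two_le {n : ℕ} (hn : 2 ≤ n) : zWeightSum n = 0 := by
  have h := natCast_mul_zWeightSum n
  rw [sum_range_zWeightSum hn, neg_zero, mul_eq_zero, Nat.cast_eq_zero] at h
  exact h.resolve_left (by omega)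

theorem sum_zWeight_mul_sum_map_of_two_le {n : ℕ} (hn : 2 ≤ n) (g : ℕ → ℝ) :
    ∑ μ : n.Partition, zWeight μ.parts * (μ.parts.map fun c : ℕ => (c : ℝ) * g c).sum
      = g (n - 1) - g n := by
  obtain ⟨n, rfl⟩ := Nat.exists_eq_add_of_le' hn
  have htail : ∑ m ∈ Finset.range n, g (n + 2 - (m + 1 + 1)) * zWeightSum (m + 1 + 1) = 0 :=
    Finset.sum_eq_zero fun m _ => by rw [zWeightSum_of_two_le (by omega), mul_zero]
  rw [sum_zWeight_mul_sum_map, Finset.sum_range_succ', Finset.sum_range_succ', htail,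
    zWeightSum_one, zWeightSum_zero, zero_add, Nat.sub_zero]
  ring

theorem sum_sum_sign_div_zPartition_mul_sum_map {k l : ℕ} (hk : 2 ≤ k) (hl : 2 ≤ l)
    (g : ℕ → ℕ → ℝ) :
    ∑ μ : k.Partition, ∑ ν : l.Partition,
      ((-1 : ℝ) ^ (Multiset.card μ.parts + Multiset.card ν.parts) /
          ((zPartition μ : ℝ) * (zPartition ν : ℝ))) *
        (μ.parts.map fun c : ℕ => (ν.parts.map fun d : ℕ => (c : ℝ) * d * g c d).sum).sum
      = g (k - 1) (l - 1) - g (k - 1) l - (g k (l - 1) - g k l) := by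
  have hweight : ∀ (μ : k.Partition) (ν : l.Partition),
      (-1 : ℝ) ^ (Multiset.card μ.parts + Multiset.card ν.parts) /
        ((zPartition μ : ℝ) * (zPartition ν : ℝ)) = zWeight μ.parts * zWeight ν.parts := by
    intro μ ν; rw [pow_add, mul_div_mul_comm]; rfl
  rw [← sum_zWeight_mul_sum_map_of_two_le hk fun c => g c (l - 1) - g c l]
  refine Finset.sum_congr rfl fun μ _ => ?_
  simp only [← sum_zWeight_mul_sum_map_of_two_le hl, Finset.mul_sum, Multiset.sum_map_sum,
    hweight]
  refine Finset.sum_congr rfl fun ν _ => ?_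
  simp only [mul_assoc, mul_left_comm _ (zWeight ν.parts), Multiset.sum_map_mul_left]

noncomputable def covKernel (q : ℝ) (c d : ℕ) : ℝ :=
  (1 - q ^ (c - 1)) * (1 - q ^ (d - 1)) / (1 - q ^ (c + d - 1))

theorem covKernel_eq_rpow (q : ℝ) {c d : ℕ} (hc : 1 ≤ c) (hd : 1 ≤ d) :
    covKernel q c d =
      (1 - q ^ ((c : ℝ) - 1)) * (1 - q ^ ((d : ℝ) - 1)) / (1 - q ^ ((c : ℝ) + d - 1)) := by
  rw [covKernel, ← Nat.cast_add]
  simp only [← Real.rpow_natCast, Nat.cast_sub hc, Nat.cast_sub hd,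
    Nat.cast_sub (by omega : 1 ≤ c + d), Nat.cast_one]

theorem mul_second_difference_covKernel {q : ℝ} (hq0 : 0 < q) (hq1 : q ≠ 1) {k l : ℕ}
    (hk : 2 ≤ k) (hl : 2 ≤ l) :
    q * (1 - q) ^ (k + l - 3) * (covKernel q (k - 1) (l - 1) - covKernel q (k - 1) l -
        (covKernel q k (l - 1) - covKernel q k l)) =
      (q - q ^ 2) ^ (k + l - 3) * (1 - q ^ 2) * (qAnalog q (k - 1) * qAnalog q (l - 1)) /
        (qAnalog q (k + l - 1) * qAnalog q (k + l - 2) * qAnalog q (k + l - 3)) := by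
  obtain ⟨a, rfl⟩ := Nat.exists_eq_add_of_le' hk
  obtain ⟨b, rfl⟩ := Nat.exists_eq_add_of_le' hl
  have hpow : ∀ m, q ^ (m + 1) ≠ 1 := fun m => by
    rw [Ne, pow_eq_one_iff_of_nonneg hq0.le m.succ_ne_zero]; exact hq1
  have h1 : q ^ (a + b + 1) ≠ 1 := hpow _
  have h2 : q ^ (a + b + 2) ≠ 1 := hpow _
  have h3 : q ^ (a + b + 3) ≠ 1 := hpow _
  simp only [covKernel, qAnalog, show a + 2 - 1 = a + 1 by omega, show b + 2 - 1 = b + 1 by omega,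
    show a + 1 + (b + 1) - 1 = a + b + 1 by omega, show a + 1 + (b + 2) - 1 = a + b + 2 by omega,
    show a + 2 + (b + 1) - 1 = a + b + 2 by omega, show a + 2 + (b + 2) - 1 = a + b + 3 by omega,
    show a + 2 + (b + 2) - 2 = a + b + 2 by omega, show a + 2 + (b + 2) - 3 = a + b + 1 by omega,
    Nat.add_sub_cancel]
  rw [show q - q ^ 2 = q * (1 - q) by ring, mul_pow]
  field_simp [sub_ne_zero.mpr hq1, sub_ne_zero.mpr h1, sub_ne_zero.mpr h2, sub_ne_zero.mpr h3]
  ring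

theorem covariance_double_partition_sum
    (q : ℝ) (hq0 : 0 < q) (hq1 : q ≠ 1) (k l : ℕ) (hk : 2 ≤ k) (hl : 2 ≤ l) :
    q * (1 - q) ^ (k + l - 3) *
        ∑ μ : Nat.Partition k, ∑ ν : Nat.Partition l,
          ((-1 : ℝ) ^ (Multiset.card μ.parts + Multiset.card ν.parts) /
              ((zPartition μ : ℝ) * (zPartition ν : ℝ))) *
            (μ.parts.map (fun c =>
              (ν.parts.map (fun d =>
                (c : ℝ) * (d : ℝ) * (1 - q ^ (c - 1)) * (1 - q ^ (d - 1)) /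
                  (1 - q ^ (c + d - 1)))).sum)).sum
      = (q - q ^ 2) ^ (k + l - 3) * (1 - q ^ 2) *
          (qAnalog q (k - 1) * qAnalog q (l - 1)) /
          (qAnalog q (k + l - 1) * qAnalog q (k + l - 2) * qAnalog q (k + l - 3)) := by
  have hsum := sum_sum_sign_div_zPartition_mul_sum_map hk hl fun c d : ℕ =>
    (1 - q ^ ((c : ℝ) - 1)) * (1 - q ^ ((d : ℝ) - 1)) / (1 - q ^ ((c : ℝ) + d - 1))
  -- The statement coerces the parts to `Multiset ℝ`, so its powers of `q` are real powers.
  simp (disch := omega) only [← covKernel_eq_rpow] at hsum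
  rw [← mul_second_difference_covKernel hq0 hq1 hk hl, ← hsum]
  simp only [Multiset.pure_def, Multiset.bind_def, Multiset.bind_singleton, Multiset.map_map,
    Function.comp_apply, mul_div_assoc, mul_assoc]
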